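/- arXiv:2009.04246 — 2 statements merged into one kernel-verified Lean document; each statement's English description precedes it below -/
import Mathlib

section
/- With weak Allee effect (M < 0), the equilibrium (0,0) of the system du/dτ = u(u+C)((u+A)(1-u)(u-M) - Qv), dv/dτ = S(u+A)(u - v + C)v is a repeller: the Jacobian at (0,0) has determinant -A²C²MS > 0 and trace -ACM + ACS > 0. -/
open Matrix

/-- Jacobian matrix (via partial derivatives) of the vector field
`F(u,v) = (u(u+C)((u+A)(1-u)(u-M) - Qv), S(u+A)(u-v+C)v)` at the point `(a,b)`. -/
noncomputable def jac (A C M Q S a b : ℝ) : Matrix (Fin 2) (Fin 2) ℝ :=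
  !![deriv (fun u => u * (u + C) * ((u + A) * (1 - u) * (u - M) - Q * b)) a,
     deriv (fun v => a * (a + C) * ((a + A) * (1 - a) * (a - M) - Q * v)) b;
     deriv (fun u => S * (u + A) * (u - b + C) * b) a,
     deriv (fun v => S * (a + A) * (a - v + C) * v) b]

theorem deriv_id_mul_at_zero {𝕜 : Type*} [NontriviallyNormedField 𝕜] {g : 𝕜 → 𝕜}
    (hg : DifferentiableAt 𝕜 g 0) : deriv (fun x => x * g x) 0 = g 0 := by
  rw [deriv_fun_mul differentiableAt_fun_id hg]
  simp

theorem jac_zero_zero (A C M Q S : ℝ) :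
    jac A C M Q S 0 0 = !![-(A * C * M), 0; 0, A * C * S] := by
  have h₀₀ : deriv (fun u => u * (u + C) * ((u + A) * (1 - u) * (u - M) - Q * 0)) 0
      = -(A * C * M) := by
    simp_rw [mul_assoc _ (_ + C)]
    rw [deriv_id_mul_at_zero (by fun_prop)]
    ring
  have h₁₁ : deriv (fun v => S * (0 + A) * (0 - v + C) * v) 0 = A * C * S := by
    simp_rw [mul_comm _ (_ : ℝ)]
    rw [deriv_id_mul_at_zero (by fun_prop)]
    ring
  simp only [jac, h₀₀, h₁₁]
  simp

theorem stmt4_general (A C M Q S : ℝ) (hA : 0 < A) (hC : 0 < C)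
    (hS : 0 < S) (hM : M < 0) :
    (jac A C M Q S 0 0).det = -A ^ 2 * C ^ 2 * M * S ∧
    0 < -A ^ 2 * C ^ 2 * M * S ∧
    (jac A C M Q S 0 0).trace = -A * C * M + A * C * S ∧
    0 < -A * C * M + A * C * S := by
  have hAC : 0 < A * C := mul_pos hA hC
  rw [jac_zero_zero, det_fin_two_of, trace_fin_two_of]
  refine ⟨by ring, ?_, by ring, ?_⟩
  · nlinarith [mul_pos (mul_pos hAC hAC) hS]
  · nlinarith

/-- With weak Allee effect (`M < 0`), the equilibrium `(0,0)` is a repeller: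
the Jacobian there has determinant `-A²C²MS > 0` and trace `-ACM + ACS > 0`. -/
theorem stmt4 (A C M Q S : ℝ) (hA : 0 < A) (hA1 : A < 1) (hC : 0 < C)
    (hS : 0 < S) (hQ : 0 < Q) (hM : M < 0) :
    (jac A C M Q S 0 0).det = -A ^ 2 * C ^ 2 * M * S ∧
    0 < -A ^ 2 * C ^ 2 * M * S ∧
    (jac A C M Q S 0 0).trace = -A * C * M + A * C * S ∧
    0 < -A * C * M + A * C * S :=
  stmt4_general A C M Q S hA hC hS hM
end

section
/- With weak Allee effect (M < 0), the equilibrium (0,C) of the system du/dτ = u(u+C)((u+A)(1-u)(u-M) - Qv), dv/dτ = S(u+A)(u - v + C)v is: a saddle point (Jacobian determinant AC²S(AM+CQ) < 0) if C < -AM/Q, and an attractor (determinant > 0 and trace -C(AS+AM+CQ) < 0) if C > -AM/Q. -/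
/-!
On the axis `u = 0` the Jacobian is lower triangular, with diagonal entries `-C(AM + Qb)` and
`SA(C - 2b)`. At `(0, C)` the determinant is therefore `AC²S(AM + CQ)`, and the sign of
`AM + CQ`, i.e. the position of `C` relative to `-AM/Q`, decides both cases.
-/

open Matrix

lemma jac_zero (A C M Q S b : ℝ) :
    jac A C M Q S 0 b =
      !![-C * (A * M + Q * b), 0; S * b * (A + C - b), S * A * (C - 2 * b)] := by
  rw [jac, EmbeddingLike.apply_eq_iff_eq]
  simp (disch := fun_prop) only [vecCons_inj, and_true, deriv_fun_mul, deriv_fun_add,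
    deriv_fun_sub, deriv_id'', deriv_const', zero_sub, deriv_neg]
  refine ⟨⟨?_, ?_⟩, ?_, ?_⟩ <;> ring

lemma lt_neg_div_iff_add_mul_neg {a b c : ℝ} (hc : 0 < c) : b < -a / c ↔ a + b * c < 0 := by
  rw [lt_div_iff₀ hc]
  constructor <;> intro h <;> linarith

lemma neg_div_lt_iff_add_mul_pos {a b c : ℝ} (hc : 0 < c) : -a / c < b ↔ 0 < a + b * c := by
  rw [div_lt_iff₀ hc]
  constructor <;> intro h <;> linarith

theorem stmt5_general (A C M Q S : ℝ) (hA : 0 < A) (hC : 0 < C)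
    (hS : 0 < S) (hQ : 0 < Q) :
    (C < -(A * M) / Q →
      (jac A C M Q S 0 C).det = A * C ^ 2 * S * (A * M + C * Q) ∧
      (jac A C M Q S 0 C).det < 0) ∧
    (C > -(A * M) / Q →
      0 < (jac A C M Q S 0 C).det ∧
      (jac A C M Q S 0 C).trace = -C * (A * S + A * M + C * Q) ∧
      (jac A C M Q S 0 C).trace < 0) := by
  have hdet : (jac A C M Q S 0 C).det = A * C ^ 2 * S * (A * M + C * Q) := by
    rw [jac_zero, det_fin_two_of]; ring
  have htr : (jac A C M Q S 0 C).trace = -C * (A * S + A * M + C * Q) := by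
    rw [jac_zero, trace_fin_two_of]; ring
  have hACS : 0 < A * C ^ 2 * S := by positivity
  refine ⟨fun hsaddle => ⟨hdet, ?_⟩, fun hattractor => ?_⟩
  · rw [hdet]
    exact mul_neg_of_pos_of_neg hACS ((lt_neg_div_iff_add_mul_neg hQ).1 hsaddle)
  · have hpos := (neg_div_lt_iff_add_mul_pos hQ).1 hattractor
    refine ⟨hdet ▸ mul_pos hACS hpos, htr, ?_⟩
    rw [htr]
    exact mul_neg_of_neg_of_pos (neg_neg_of_pos hC) (by linarith [mul_pos hA hS])

/-- With weak Allee effect (`M < 0`), the equilibrium `(0,C)` is a saddle point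
if `C < -AM/Q` (Jacobian determinant `AC²S(AM+CQ) < 0`) and an attractor
(determinant positive, trace `-C(AS+AM+CQ)` negative) if `C > -AM/Q`. -/
theorem stmt5 (A C M Q S : ℝ) (hA : 0 < A) (hA1 : A < 1) (hC : 0 < C)
    (hS : 0 < S) (hQ : 0 < Q) (hM : M < 0) :
    (C < -(A * M) / Q →
      (jac A C M Q S 0 C).det = A * C ^ 2 * S * (A * M + C * Q) ∧
      (jac A C M Q S 0 C).det < 0) ∧
    (C > -(A * M) / Q →
      0 < (jac A C M Q S 0 C).det ∧
      (jac A C M Q S 0 C).trace = -C * (A * S + A * M + C * Q) ∧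
      (jac A C M Q S 0 C).trace < 0) :=
  stmt5_general A C M Q S hA hC hS hQ
end
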